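/- arXiv:2002.12191 — 4 statements merged into one kernel-verified Lean document; each statement's English description precedes it below -/
import Mathlib

section
/- Let b : [0, x_0] → ℝ be γ-Hölder continuous with constant C (0 < γ < 1/2), let λ ∈ ℝ, β > 0, and let φ : [t, x_0] → ℝ be continuously differentiable with φ(t) = 0, satisfying the integral equation φ'(x) − φ'(t) = (2/√β) φ(x)(b(x) − b(t)) − (2/√β) ∫_t^x φ'(s)(b(s) − b(t)) ds + ∫_t^x (s − λ) φ(s) ds for x ∈ [t, x_0]. Suppose sup_{x ∈ [t,x_0]} |φ'(x) − φ'(t)| ≤ η. Then there is a constant C' depending only on C, γ, x_0, λ, β such that |φ'(x) − φ'(t)| ≤ C' (η + |φ'(t)|) |x − t|^{1+γ} for all x ∈ [t, x_0]. -/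
open MeasureTheory intervalIntegral Set

/-- Derivative bound for stochastic Airy eigenfunctions: if `b` is `γ`-Hölder with constant `C`
on `[0, x₀]` (`0 < γ < 1/2`), `φ` is continuously differentiable on `[t, x₀]` with `φ t = 0`,
satisfies the eigenfunction integral equation, and `|φ' − φ'(t)| ≤ η` on `[t, x₀]`, then
`|φ'(x) − φ'(t)| ≤ C' (η + |φ'(t)|) |x − t|^(1+γ)` where `C'` depends only on
`C, γ, x₀, λ, β`. -/
theorem stmt_5 (C γ x₀ lam β : ℝ) (hC : 0 ≤ C) (hγ : γ ∈ Ioo (0 : ℝ) (1 / 2))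
    (hx₀ : 0 < x₀) (hβ : 0 < β) :
    ∃ C' : ℝ, 0 < C' ∧
      ∀ (t : ℝ) (b φ φ' : ℝ → ℝ) (η : ℝ),
        0 ≤ t → t < x₀ →
        (∀ x ∈ Icc (0 : ℝ) x₀, ∀ y ∈ Icc (0 : ℝ) x₀, |b x - b y| ≤ C * |x - y| ^ γ) →
        (∀ x ∈ Icc t x₀, HasDerivAt φ (φ' x) x) →
        ContinuousOn φ' (Icc t x₀) →
        φ t = 0 →
        (∀ x ∈ Icc t x₀,
          φ' x - φ' t = (2 / Real.sqrt β) * φ x * (b x - b t)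
            - (2 / Real.sqrt β) * ∫ s in t..x, φ' s * (b s - b t)
            + ∫ s in t..x, (s - lam) * φ s) →
        0 ≤ η →
        (∀ x ∈ Icc t x₀, |φ' x - φ' t| ≤ η) →
        ∀ x ∈ Icc t x₀, |φ' x - φ' t| ≤ C' * (η + |φ' t|) * |x - t| ^ (1 + γ) := by
  obtain ⟨hγ0, hγ2⟩ := hγ
  have hsβ : 0 < Real.sqrt β := Real.sqrt_pos.2 hβ
  set c1 : ℝ := 4 * C / Real.sqrt β + 2 / Real.sqrt β * (x₀ + |lam|) * x₀ * x₀ ^ (1 - γ) + 1 with hc1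
  have h1 : 0 ≤ 4 * C / Real.sqrt β := by positivity
  have h2 : 0 ≤ 2 / Real.sqrt β * (x₀ + |lam|) * x₀ * x₀ ^ (1 - γ) := by positivity
  have hc1pos : 0 < c1 := by
    have h3 : (0:ℝ) < 4 * C / Real.sqrt β + 2 / Real.sqrt β * (x₀ + |lam|) * x₀ * x₀ ^ (1 - γ) + 1 := by linarith
    rw [hc1]; exact h3
  refine ⟨c1, hc1pos, ?_⟩
  intro t b φ φ' η ht htx hb hφd hφ'c hφt heq hη hbd x hx
  obtain ⟨htx', hxx₀⟩ := hx
  set M := η + |φ' t| with hM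
  have hM0 : 0 ≤ M := by positivity
  set d := x - t with hdd
  have hd0 : 0 ≤ d := by simp only [hdd]; linarith
  have hdx : d ≤ x₀ := by simp only [hdd]; linarith
  have habsd : |x - t| = d := abs_of_nonneg hd0
  rcases eq_or_lt_of_le hd0 with hd0' | hd0'
  · have hxt : x = t := by simp only [hdd] at hd0'; linarith
    subst hxt
    have : |x - x| ^ (1 + γ) = 0 := by
      rw [sub_self, abs_zero]
      exact Real.zero_rpow (by positivity)
    rw [this, sub_self, abs_zero, mul_zero]
  -- bound on φ'
  have hφ'bd : ∀ s ∈ Icc t x₀, |φ' s| ≤ M := by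
    intro s hs
    have h := hbd s hs
    have : |φ' s| = |(φ' s - φ' t) + φ' t| := by rw [sub_add_cancel]
    rw [this]
    calc |(φ' s - φ' t) + φ' t| ≤ |φ' s - φ' t| + |φ' t| := abs_add_le _ _
      _ ≤ M := by rw [hM]; linarith
  -- bound on φ
  have hφbd : ∀ s ∈ Icc t x₀, |φ s| ≤ M * (s - t) := by
    intro s hs
    have hts : t ≤ s := hs.1
    have hsub : Icc t s ⊆ Icc t x₀ := Icc_subset_Icc le_rfl hs.2
    have hftc : ∫ u in t..s, φ' u = φ s - φ t := by
      apply intervalIntegral.integral_eq_sub_of_hasDerivAt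
      · intro u hu
        exact hφd u (hsub (by rwa [uIcc_of_le hts] at hu))
      · exact (hφ'c.mono hsub).intervalIntegrable_of_Icc hts
    have hnorm : |∫ u in t..s, φ' u| ≤ M * |s - t| := by
      rw [← Real.norm_eq_abs]
      apply intervalIntegral.norm_integral_le_of_norm_le_const
      intro u hu
      have hu' : u ∈ Icc t x₀ := hsub (Ioc_subset_Icc_self (by rwa [uIoc_of_le hts] at hu))
      simpa [Real.norm_eq_abs] using hφ'bd u hu'
    rw [hftc, hφt, sub_zero] at hnorm
    rwa [abs_of_nonneg (by linarith : (0:ℝ) ≤ s - t)] at hnorm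
  -- Hölder bound for b on [t, x]
  have hbbd : ∀ s ∈ Icc t x, |b s - b t| ≤ C * d ^ γ := by
    intro s hs
    have hs0 : s ∈ Icc (0:ℝ) x₀ := ⟨le_trans ht hs.1, le_trans hs.2 hxx₀⟩
    have ht0 : t ∈ Icc (0:ℝ) x₀ := ⟨ht, le_of_lt htx⟩
    have h := hb s hs0 t ht0
    have hst : |s - t| ≤ d := by
      rw [abs_of_nonneg (by linarith [hs.1] : (0:ℝ) ≤ s - t)]
      simp only [hdd]; linarith [hs.2]
    calc |b s - b t| ≤ C * |s - t| ^ γ := h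
      _ ≤ C * d ^ γ :=
          mul_le_mul_of_nonneg_left
            (Real.rpow_le_rpow (abs_nonneg _) hst hγ0.le) hC
  -- pieces
  -- pieces
  have hxm : x ∈ Icc t x₀ := ⟨htx', hxx₀⟩
  have heqx := heq x hxm
  have hKpos : 0 < d ^ (1 + γ) := Real.rpow_pos_of_pos hd0' _
  have hsplit : d ^ ((1:ℝ) + γ) = d * d ^ γ := by
    rw [Real.rpow_add hd0', Real.rpow_one]
  have hd2 : d * d ≤ d ^ ((1:ℝ) + γ) * x₀ ^ (1 - γ) := by
    have hdd' : d = d ^ γ * d ^ ((1:ℝ) - γ) := by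
      rw [← Real.rpow_add hd0', add_sub_cancel, Real.rpow_one]
    calc d * d = d * (d ^ γ * d ^ ((1:ℝ) - γ)) := by rw [← hdd']
      _ ≤ d * (d ^ γ * x₀ ^ ((1:ℝ) - γ)) := by
          apply mul_le_mul_of_nonneg_left _ hd0
          apply mul_le_mul_of_nonneg_left _ (Real.rpow_nonneg hd0 _)
          exact Real.rpow_le_rpow hd0 hdx (by linarith)
      _ = d ^ ((1:ℝ) + γ) * x₀ ^ (1 - γ) := by rw [hsplit]; ring
  -- bound on the inner integral D
  have hDbd : |∫ s in t..x, (s - lam) * φ s| ≤ (x₀ + |lam|) * (M * d) * d := by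
    have hint : |∫ s in t..x, (s - lam) * φ s| ≤ (x₀ + |lam|) * (M * d) * |x - t| := by
      rw [← Real.norm_eq_abs]
      apply intervalIntegral.norm_integral_le_of_norm_le_const
      intro u hu
      rw [uIoc_of_le htx'] at hu
      have hu1 : u ∈ Icc t x₀ := ⟨le_of_lt hu.1, le_trans hu.2 hxx₀⟩
      have hsl : |u - lam| ≤ x₀ + |lam| := by
        have h' : |u - lam| ≤ |u| + |lam| := abs_sub _ _
        have hu0 : |u| ≤ x₀ := by
          rw [abs_of_nonneg (le_trans ht hu1.1)]; exact hu1.2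
        linarith
      have hφu : |φ u| ≤ M * d := by
        calc |φ u| ≤ M * (u - t) := hφbd u hu1
          _ ≤ M * d := by
              apply mul_le_mul_of_nonneg_left _ hM0
              simp only [hdd]; linarith [hu.2]
      calc ‖(u - lam) * φ u‖ = |u - lam| * |φ u| := abs_mul _ _
        _ ≤ (x₀ + |lam|) * (M * d) := mul_le_mul hsl hφu (abs_nonneg _) (by positivity)
    rwa [habsd] at hint
  -- bound on first term
  have hAbd : |(2 / Real.sqrt β) * φ x * (b x - b t)|
      ≤ 2 * C / Real.sqrt β * (M * d ^ (1 + γ)) := by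
    rw [abs_mul, abs_mul]
    have h1' : |2 / Real.sqrt β| = 2 / Real.sqrt β := abs_of_pos (by positivity)
    rw [h1']
    have hφx : |φ x| ≤ M * d := by simpa [hdd] using hφbd x hxm
    have hbx : |b x - b t| ≤ C * d ^ γ := hbbd x ⟨htx', le_refl x⟩
    calc 2 / Real.sqrt β * |φ x| * |b x - b t|
        ≤ 2 / Real.sqrt β * (M * d) * (C * d ^ γ) :=
          mul_le_mul (mul_le_mul_of_nonneg_left hφx (by positivity)) hbx
            (abs_nonneg _) (by positivity)
      _ = 2 * C / Real.sqrt β * (M * d ^ (1 + γ)) := by rw [hsplit]; ring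
  -- bound on the big integral term
  have hBbd : |(2 / Real.sqrt β) * ∫ s in t..x, φ' s * (b s - b t)
        + ∫ s in t..x, (s - lam) * φ s|
      ≤ 2 / Real.sqrt β * ((M * (C * d ^ γ) + (x₀ + |lam|) * (M * d) * d) * d) := by
    rw [abs_mul]
    have h1' : |2 / Real.sqrt β| = 2 / Real.sqrt β := abs_of_pos (by positivity)
    rw [h1']
    apply mul_le_mul_of_nonneg_left _ (by positivity : (0:ℝ) ≤ 2 / Real.sqrt β)
    have hint : |∫ s in t..x, φ' s * (b s - b t) + ∫ s in t..x, (s - lam) * φ s|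
        ≤ (M * (C * d ^ γ) + (x₀ + |lam|) * (M * d) * d) * |x - t| := by
      rw [← Real.norm_eq_abs]
      apply intervalIntegral.norm_integral_le_of_norm_le_const
      intro u hu
      rw [uIoc_of_le htx'] at hu
      have hu1 : u ∈ Icc t x₀ := ⟨le_of_lt hu.1, le_trans hu.2 hxx₀⟩
      have hu2 : u ∈ Icc t x := ⟨le_of_lt hu.1, hu.2⟩
      have h1'' : |φ' u * (b u - b t)| ≤ M * (C * d ^ γ) := by
        rw [abs_mul]
        exact mul_le_mul (hφ'bd u hu1) (hbbd u hu2) (abs_nonneg _) hM0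
      calc ‖φ' u * (b u - b t) + ∫ s in t..x, (s - lam) * φ s‖
          ≤ |φ' u * (b u - b t)| + |∫ s in t..x, (s - lam) * φ s| := abs_add_le _ _
        _ ≤ M * (C * d ^ γ) + (x₀ + |lam|) * (M * d) * d := add_le_add h1'' hDbd
    rwa [habsd] at hint
  -- combine
  have htri : |φ' x - φ' t|
      ≤ |(2 / Real.sqrt β) * φ x * (b x - b t)|
        + |(2 / Real.sqrt β) * ∫ s in t..x, φ' s * (b s - b t)
            + ∫ s in t..x, (s - lam) * φ s| := by
    rw [heqx]
    exact abs_sub _ _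
  rw [habsd]
  have hK0 : 0 ≤ M * d ^ (1 + γ) := by positivity
  have hB2 : 2 / Real.sqrt β * ((M * (C * d ^ γ) + (x₀ + |lam|) * (M * d) * d) * d)
      ≤ 2 * C / Real.sqrt β * (M * d ^ (1 + γ))
        + 2 / Real.sqrt β * (x₀ + |lam|) * x₀ * x₀ ^ (1 - γ) * (M * d ^ (1 + γ)) := by
    have hterm1 : 2 / Real.sqrt β * (M * (C * d ^ γ) * d)
        = 2 * C / Real.sqrt β * (M * d ^ (1 + γ)) := by rw [hsplit]; ring
    have hterm2 : (x₀ + |lam|) * (M * d) * d * d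
        ≤ (x₀ + |lam|) * x₀ * x₀ ^ (1 - γ) * (M * d ^ (1 + γ)) := by
      calc (x₀ + |lam|) * (M * d) * d * d = (x₀ + |lam|) * M * (d * d) * d := by ring
        _ ≤ (x₀ + |lam|) * M * (d ^ ((1:ℝ) + γ) * x₀ ^ (1 - γ)) * x₀ := by
            apply mul_le_mul (mul_le_mul_of_nonneg_left hd2 (by positivity)) hdx hd0
            positivity
        _ = (x₀ + |lam|) * x₀ * x₀ ^ (1 - γ) * (M * d ^ (1 + γ)) := by ring
    have hterm2' : 2 / Real.sqrt β * ((x₀ + |lam|) * (M * d) * d * d)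
        ≤ 2 / Real.sqrt β * (x₀ + |lam|) * x₀ * x₀ ^ (1 - γ) * (M * d ^ (1 + γ)) := by
      calc 2 / Real.sqrt β * ((x₀ + |lam|) * (M * d) * d * d)
          ≤ 2 / Real.sqrt β * ((x₀ + |lam|) * x₀ * x₀ ^ (1 - γ) * (M * d ^ (1 + γ))) :=
            mul_le_mul_of_nonneg_left hterm2 (by positivity)
        _ = 2 / Real.sqrt β * (x₀ + |lam|) * x₀ * x₀ ^ (1 - γ) * (M * d ^ (1 + γ)) := by
            ring
    calc 2 / Real.sqrt β * ((M * (C * d ^ γ) + (x₀ + |lam|) * (M * d) * d) * d)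
        = 2 / Real.sqrt β * (M * (C * d ^ γ) * d)
          + 2 / Real.sqrt β * ((x₀ + |lam|) * (M * d) * d * d) := by ring
      _ ≤ 2 * C / Real.sqrt β * (M * d ^ (1 + γ))
          + 2 / Real.sqrt β * (x₀ + |lam|) * x₀ * x₀ ^ (1 - γ) * (M * d ^ (1 + γ)) := by
          rw [hterm1]
          exact add_le_add le_rfl hterm2'
  calc |φ' x - φ' t|
      ≤ 2 * C / Real.sqrt β * (M * d ^ (1 + γ))
        + (2 * C / Real.sqrt β * (M * d ^ (1 + γ))
          + 2 / Real.sqrt β * (x₀ + |lam|) * x₀ * x₀ ^ (1 - γ) * (M * d ^ (1 + γ))) := by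
        linarith [htri, hAbd, hBbd, hB2]
    _ = (4 * C / Real.sqrt β + 2 / Real.sqrt β * (x₀ + |lam|) * x₀ * x₀ ^ (1 - γ))
          * (M * d ^ (1 + γ)) := by ring
    _ ≤ c1 * (M * d ^ (1 + γ)) := by
        apply mul_le_mul_of_nonneg_right _ hK0
        rw [hc1]; linarith
    _ = c1 * M * d ^ (1 + γ) := by ring
end

section
/- Under the same hypotheses (φ satisfies the stochastic Airy eigenfunction integral equation on [t, x_0] with a γ-Hölder path b, φ(t) = 0, and sup |φ' − φ'(t)| ≤ η on [t, x_0]), there is a constant C' depending only on the Hölder constant, γ, x_0, λ, β such that |φ(x) − (x − t) φ'(t)| ≤ C' (η + |φ'(t)|) |x − t|^{2+γ} for all x ∈ [t, x_0]. -/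
open MeasureTheory intervalIntegral Set

/-- Derivative bound for stochastic Airy eigenfunctions: if `b` is `γ`-Hölder with constant `C`
on `[0, x₀]` (`0 < γ < 1/2`), `φ` is continuously differentiable on `[t, x₀]` with `φ t = 0`,
satisfies the eigenfunction integral equation, and `|φ' − φ'(t)| ≤ η` on `[t, x₀]`, then
`|φ'(x) − φ'(t)| ≤ C' (η + |φ'(t)|) |x − t|^(1+γ)` where `C'` depends only on
`C, γ, x₀, λ, β`. -/
theorem stmt_6 (C γ x₀ lam β : ℝ) (hC : 0 ≤ C) (hγ : γ ∈ Ioo (0 : ℝ) (1 / 2))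
    (hx₀ : 0 < x₀) (hβ : 0 < β) :
    ∃ C' : ℝ, 0 < C' ∧
      ∀ (t : ℝ) (b φ φ' : ℝ → ℝ) (η : ℝ),
        0 ≤ t → t < x₀ →
        (∀ x ∈ Icc (0 : ℝ) x₀, ∀ y ∈ Icc (0 : ℝ) x₀, |b x - b y| ≤ C * |x - y| ^ γ) →
        (∀ x ∈ Icc t x₀, HasDerivAt φ (φ' x) x) →
        ContinuousOn φ' (Icc t x₀) →
        φ t = 0 →
        (∀ x ∈ Icc t x₀,
          φ' x - φ' t = (2 / Real.sqrt β) * φ x * (b x - b t)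
            - (2 / Real.sqrt β) * ∫ s in t..x, φ' s * (b s - b t)
            + ∫ s in t..x, (s - lam) * φ s) →
        0 ≤ η →
        (∀ x ∈ Icc t x₀, |φ' x - φ' t| ≤ η) →
        ∀ x ∈ Icc t x₀, |φ x - (x - t) * φ' t| ≤ C' * (η + |φ' t|) * |x - t| ^ (2 + γ) := by
  obtain ⟨hγ0, hγ2⟩ := hγ
  have hsb : 0 < Real.sqrt β := Real.sqrt_pos.mpr hβ
  set K : ℝ := 4 * C / Real.sqrt β + 2 / Real.sqrt β * (x₀ + |lam|) * x₀ ^ (2 - γ) with hKdef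
  have hK0 : 0 ≤ K := by positivity
  refine ⟨K + 1, by positivity, ?_⟩
  intro t b φ φ' η ht0 htx hb hφd hφ'c hφt heq hη hbnd
  set M := η + |φ' t| with hMdef
  have hM0 : 0 ≤ M := by positivity
  have hsub : Icc t x₀ ⊆ Icc (0 : ℝ) x₀ := Icc_subset_Icc ht0 le_rfl
  have hφ'M : ∀ s ∈ Icc t x₀, |φ' s| ≤ M := by
    intro s hs
    calc |φ' s| = |(φ' s - φ' t) + φ' t| := by ring_nf
      _ ≤ |φ' s - φ' t| + |φ' t| := abs_add_le _ _
      _ ≤ η + |φ' t| := by linarith [hbnd s hs]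
  -- FTC
  have hint : ∀ x ∈ Icc t x₀, IntervalIntegrable φ' volume t x := by
    intro x hx
    apply ContinuousOn.intervalIntegrable
    apply hφ'c.mono
    rw [uIcc_of_le hx.1]
    exact Icc_subset_Icc le_rfl hx.2
  have hftc : ∀ x ∈ Icc t x₀, φ x = ∫ s in t..x, φ' s := by
    intro x hx
    have h := intervalIntegral.integral_eq_sub_of_hasDerivAt (f := φ) (f' := φ')
      (a := t) (b := x) ?_ (hint x hx)
    · rw [h, hφt, sub_zero]
    · intro s hs
      rw [uIcc_of_le hx.1] at hs
      exact hφd s ⟨hs.1, hs.2.trans hx.2⟩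
  have hφb : ∀ x ∈ Icc t x₀, |φ x| ≤ M * (x - t) := by
    intro x hx
    rw [hftc x hx]
    have := intervalIntegral.norm_integral_le_of_norm_le_const (C := M) (f := φ')
      (a := t) (b := x) ?_
    · rw [Real.norm_eq_abs, abs_of_nonneg (show (0:ℝ) ≤ x - t by linarith [hx.1])] at this
      exact this
    · intro s hs
      rw [uIoc_of_le hx.1] at hs
      exact hφ'M s ⟨hs.1.le, hs.2.trans hx.2⟩
  -- derivative bound
  have hder : ∀ x ∈ Icc t x₀, |φ' x - φ' t| ≤ K * M * (x - t) ^ (1 + γ) := by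
    intro x hx
    set z := x - t with hz
    have hz0 : 0 ≤ z := by simp [hz]; linarith [hx.1]
    have hzx : z ≤ x₀ := by simp [hz]; linarith [hx.2]
    rcases eq_or_lt_of_le hz0 with h0 | hzpos
    · have hxt : x = t := by linarith [h0]
      rw [hxt]
      simp
      positivity
    have hzg : (0:ℝ) < z ^ γ := Real.rpow_pos_of_pos hzpos _
    have hbx : |b x - b t| ≤ C * z ^ γ := by
      have := hb x (hsub hx) t (hsub ⟨le_rfl, htx.le⟩)
      rwa [abs_of_nonneg hz0] at this
    have hA : |(2 / Real.sqrt β) * φ x * (b x - b t)| ≤ (2 / Real.sqrt β) * (M * z) * (C * z ^ γ) := by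
      rw [abs_mul, abs_mul]
      rw [abs_of_pos (show (0:ℝ) < 2 / Real.sqrt β by positivity)]
      apply mul_le_mul
      · apply mul_le_mul_of_nonneg_left (hφb x hx) (by positivity)
      · exact hbx
      · exact abs_nonneg _
      · positivity
    have hI2 : |∫ u in t..x, (u - lam) * φ u| ≤ (x₀ + |lam|) * (M * z) * z := by
      have := intervalIntegral.norm_integral_le_of_norm_le_const (C := (x₀ + |lam|) * (M * z))
        (f := fun u => (u - lam) * φ u) (a := t) (b := x) ?_
      · rw [Real.norm_eq_abs, abs_of_nonneg hz0] at this
        exact this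
      · intro s hs
        rw [uIoc_of_le hx.1] at hs
        have hs' : s ∈ Icc t x₀ := ⟨hs.1.le, hs.2.trans hx.2⟩
        rw [Real.norm_eq_abs, abs_mul]
        apply mul_le_mul
        · calc |s - lam| ≤ |s| + |lam| := abs_sub _ _
            _ ≤ x₀ + |lam| := by
                have : |s| ≤ x₀ := by
                  rw [abs_of_nonneg (by linarith [hs.1.le, ht0])]
                  exact hs'.2
                linarith
        · calc |φ s| ≤ M * (s - t) := hφb s hs'
            _ ≤ M * z := by apply mul_le_mul_of_nonneg_left _ hM0; linarith [hs.2]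
        · exact abs_nonneg _
        · positivity
    have hJ : |∫ s in t..x, (φ' s * (b s - b t) + ∫ u in t..x, (u - lam) * φ u)| ≤
        (M * (C * z ^ γ) + (x₀ + |lam|) * (M * z) * z) * z := by
      have := intervalIntegral.norm_integral_le_of_norm_le_const
        (C := M * (C * z ^ γ) + (x₀ + |lam|) * (M * z) * z)
        (f := fun s => φ' s * (b s - b t) + ∫ u in t..x, (u - lam) * φ u) (a := t) (b := x) ?_
      · rw [Real.norm_eq_abs, abs_of_nonneg hz0] at this
        exact this
      · intro s hs
        rw [uIoc_of_le hx.1] at hs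
        have hs' : s ∈ Icc t x₀ := ⟨hs.1.le, hs.2.trans hx.2⟩
        rw [Real.norm_eq_abs]
        have h1 : |φ' s * (b s - b t)| ≤ M * (C * z ^ γ) := by
          rw [abs_mul]
          apply mul_le_mul (hφ'M s hs') _ (abs_nonneg _) hM0
          calc |b s - b t| ≤ C * |s - t| ^ γ := hb s (hsub hs') t (hsub ⟨le_rfl, htx.le⟩)
            _ ≤ C * z ^ γ := by
                apply mul_le_mul_of_nonneg_left _ hC
                apply Real.rpow_le_rpow (abs_nonneg _) _ hγ0.le
                rw [abs_of_nonneg (by linarith [hs.1.le])]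
                linarith [hs.2]
        calc |φ' s * (b s - b t) + ∫ u in t..x, (u - lam) * φ u|
            ≤ |φ' s * (b s - b t)| + |∫ u in t..x, (u - lam) * φ u| := abs_add_le _ _
          _ ≤ M * (C * z ^ γ) + (x₀ + |lam|) * (M * z) * z := add_le_add h1 hI2
    have hz3 : z * z * z ≤ x₀ ^ (2 - γ) * z ^ (1 + γ) := by
      have e1 : z * z * z = z ^ (2 - γ) * z ^ (1 + γ) := by
        rw [← Real.rpow_add hzpos, show (2:ℝ) - γ + (1 + γ) = 3 by ring,
          show (3:ℝ) = ((3:ℕ):ℝ) by norm_num, Real.rpow_natCast]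
        ring
      rw [e1]
      apply mul_le_mul_of_nonneg_right _ (Real.rpow_nonneg hz0 _)
      exact Real.rpow_le_rpow hz0 hzx (by linarith)
    have hzz : z * z ^ γ = z ^ (1 + γ) := by
      rw [Real.rpow_add hzpos, Real.rpow_one]
    calc |φ' x - φ' t|
        = |(2 / Real.sqrt β) * φ x * (b x - b t)
            - (2 / Real.sqrt β) * ∫ s in t..x, (φ' s * (b s - b t)
              + ∫ u in t..x, (u - lam) * φ u)| := by rw [heq x hx]
      _ ≤ |(2 / Real.sqrt β) * φ x * (b x - b t)|
            + (2 / Real.sqrt β) * |∫ s in t..x, (φ' s * (b s - b t)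
              + ∫ u in t..x, (u - lam) * φ u)| := by
          have h := abs_sub ((2 / Real.sqrt β) * φ x * (b x - b t))
            ((2 / Real.sqrt β) * ∫ s in t..x, (φ' s * (b s - b t)
              + ∫ u in t..x, (u - lam) * φ u))
          rwa [abs_mul (2 / Real.sqrt β), abs_of_pos (show (0:ℝ) < 2 / Real.sqrt β by positivity)] at h
      _ ≤ (2 / Real.sqrt β) * (M * z) * (C * z ^ γ)
            + (2 / Real.sqrt β) * ((M * (C * z ^ γ) + (x₀ + |lam|) * (M * z) * z) * z) := by
          apply add_le_add hA
          exact mul_le_mul_of_nonneg_left hJ (by positivity)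
      _ = (4 * C / Real.sqrt β) * M * (z * z ^ γ)
            + (2 / Real.sqrt β) * (x₀ + |lam|) * M * (z * z * z) := by ring
      _ ≤ (4 * C / Real.sqrt β) * M * z ^ (1 + γ)
            + (2 / Real.sqrt β) * (x₀ + |lam|) * M * (x₀ ^ (2 - γ) * z ^ (1 + γ)) := by
          rw [hzz]
          have := mul_le_mul_of_nonneg_left hz3
            (show (0:ℝ) ≤ (2 / Real.sqrt β) * (x₀ + |lam|) * M by positivity)
          linarith
      _ = K * M * z ^ (1 + γ) := by rw [hKdef]; ring
  -- conclusion
  intro x hx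
  set z := x - t with hz
  have hz0 : 0 ≤ z := by simp [hz]; linarith [hx.1]
  rcases eq_or_lt_of_le hz0 with h0 | hzpos
  · have hxt : x = t := by
      have := hz
      linarith [h0]
    have hφx : φ x = 0 := by rw [hxt, hφt]
    rw [← h0, hφx]
    simp [Real.zero_rpow (show (2:ℝ)+γ ≠ 0 by linarith)]
  have hrep : φ x - z * φ' t = ∫ s in t..x, (φ' s - φ' t) := by
    rw [intervalIntegral.integral_sub (hint x hx) (intervalIntegrable_const),
      intervalIntegral.integral_const, hftc x hx, smul_eq_mul]
  have hbound := intervalIntegral.norm_integral_le_of_norm_le_const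
    (C := K * M * z ^ (1 + γ)) (f := fun s => φ' s - φ' t) (a := t) (b := x) ?_
  · rw [Real.norm_eq_abs, ← hrep, abs_of_nonneg hz0] at hbound
    have hzz : z ^ (1 + γ) * z = z ^ (2 + γ) := by
      have h := Real.rpow_add hzpos (1 + γ) 1
      rw [Real.rpow_one] at h
      rw [← h, show (1:ℝ) + γ + 1 = 2 + γ by ring]
    rw [abs_of_nonneg hz0]
    calc |φ x - z * φ' t| ≤ K * M * z ^ (1 + γ) * z := hbound
      _ = K * M * z ^ (2 + γ) := by rw [mul_assoc, hzz]
      _ ≤ (K + 1) * M * z ^ (2 + γ) := by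
          apply mul_le_mul_of_nonneg_right _ (Real.rpow_nonneg hz0 _)
          apply mul_le_mul_of_nonneg_right _ hM0
          linarith
  · intro s hs
    rw [uIoc_of_le hx.1] at hs
    have hs' : s ∈ Icc t x₀ := ⟨hs.1.le, hs.2.trans hx.2⟩
    rw [Real.norm_eq_abs]
    calc |φ' s - φ' t| ≤ K * M * (s - t) ^ (1 + γ) := hder s hs'
      _ ≤ K * M * z ^ (1 + γ) := by
          apply mul_le_mul_of_nonneg_left _ (by positivity)
          apply Real.rpow_le_rpow (by linarith [hs.1.le]) (by linarith [hs.2]) (by linarith)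
end

section
/- Suppose for all s < t in an interval [c, d] and all ε ∈ (0, ρ/(t−s)) we have (ε/(1+ε)) g(s)² − C ε^{1+γ}(t−s)^γ ≤ (Λ(t) − Λ(s))/(t − s) ≤ ((1+ε)/ε) g(t)² + C ε^{1+γ}(t−s)^γ, where g : [c,d] → ℝ is continuous and γ ∈ (0, 1/2), C, ρ > 0. Then Λ is differentiable on (c, d) with Λ'(t) = g(t)² for all t. -/
open Set Filter Topology

/-!
Choosing `ε = (t - s)^(-δ)` with `δ = γ / (2 (1 + γ))` turns the two bounds into
`g(s)² / (1 + (t-s)^δ) - C (t-s)^(γ/2) ≤ slope Λ s t ≤ (1 + (t-s)^δ) g(t)² + C (t-s)^(γ/2)`,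
and both sides tend to `g(t₀)²` as `s, t → t₀`, by continuity of `g`.
-/

theorem hasDerivWithinAt_of_slope_squeeze {f : ℝ → ℝ} {s : Set ℝ} {x D : ℝ} {L U : ℝ × ℝ → ℝ}
    (hx : x ∈ s) (hL : Tendsto L (𝓝[s] x ×ˢ 𝓝[s] x) (𝓝 D))
    (hU : Tendsto U (𝓝[s] x ×ˢ 𝓝[s] x) (𝓝 D))
    (hLU : ∀ᶠ p in 𝓝[s] x ×ˢ 𝓝[s] x, p.1 < p.2 →
      L p ≤ slope f p.1 p.2 ∧ slope f p.1 p.2 ≤ U p) :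
    HasDerivWithinAt f D s x := by
  rw [hasDerivWithinAt_iff_tendsto_slope]
  have hmem : ∀ᶠ u in 𝓝[s \ {x}] x, u ∈ s ∧ u ≠ x := self_mem_nhdsWithin
  have hmin : Tendsto (fun u => min u x) (𝓝[s \ {x}] x) (𝓝[s] x) :=
    tendsto_nhdsWithin_of_tendsto_nhds_of_eventually_within _
      ((continuous_id.min continuous_const).tendsto' x x (min_self x) |>.mono_left
        nhdsWithin_le_nhds)
      (hmem.mono fun u hu => by rcases min_choice u x with h | h <;> rw [h] <;> tauto)
  have hmax : Tendsto (fun u => max u x) (𝓝[s \ {x}] x) (𝓝[s] x) :=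
    tendsto_nhdsWithin_of_tendsto_nhds_of_eventually_within _
      ((continuous_id.max continuous_const).tendsto' x x (max_self x) |>.mono_left
        nhdsWithin_le_nhds)
      (hmem.mono fun u hu => by rcases max_choice u x with h | h <;> rw [h] <;> tauto)
  have hφ := hmin.prodMk hmax
  have hslope : ∀ u, slope f x u = slope f (min u x) (max u x) := by
    intro u
    rcases le_total u x with h | h
    · rw [min_eq_left h, max_eq_right h, slope_comm]
    · rw [min_eq_right h, max_eq_left h]
  have hbounds := (hφ.eventually hLU).and hmem
  refine tendsto_of_tendsto_of_tendsto_of_le_of_le' (hL.comp hφ) (hU.comp hφ) ?_ ?_ <;>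
  · filter_upwards [hbounds] with u ⟨h, _, hux⟩
    have := h (min_lt_max.2 hux)
    simp only [Function.comp_apply, hslope u]
    tauto

theorem tendsto_sub_rpow_nhds_diagonal {a : ℝ} (ha : 0 < a) (x : ℝ) :
    Tendsto (fun p : ℝ × ℝ => (p.2 - p.1) ^ a) (𝓝 (x, x)) (𝓝 0) := by
  have hsub : Tendsto (fun p : ℝ × ℝ => p.2 - p.1) (𝓝 (x, x)) (𝓝 0) :=
    (continuous_snd.sub continuous_fst).tendsto' _ _ (sub_self x)
  have := (Real.continuousAt_rpow_const 0 a (Or.inr ha.le)).tendsto.comp hsub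
  rwa [Real.zero_rpow ha.ne'] at this

/-- The bounds at the single scale `ε = h^(-δ)`, admissible since `h^(1-δ) < ρ`. -/
theorem bounds_at_rpow_neg {a b q h ρ C γ δ : ℝ} (hh : 0 < h) (hhρ : h ^ (1 - δ) < ρ)
    (hB : ∀ ε : ℝ, 0 < ε → ε < ρ / h →
      ε / (1 + ε) * a - C * ε ^ (1 + γ) * h ^ γ ≤ q ∧
      q ≤ (1 + ε) / ε * b + C * ε ^ (1 + γ) * h ^ γ) :
    a / (1 + h ^ δ) - C * h ^ (γ - δ * (1 + γ)) ≤ q ∧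
      q ≤ (1 + h ^ δ) * b + C * h ^ (γ - δ * (1 + γ)) := by
  have hpos : 0 < h ^ δ := Real.rpow_pos_of_pos hh δ
  have hε : h ^ (-δ) = (h ^ δ)⁻¹ := Real.rpow_neg hh.le δ
  have hadmissible : h ^ (-δ) < ρ / h := by
    rwa [lt_div_iff₀ hh, ← Real.rpow_add_one hh.ne', neg_add_eq_sub]
  have herr : (h ^ (-δ)) ^ (1 + γ) * h ^ γ = h ^ (γ - δ * (1 + γ)) := by
    rw [← Real.rpow_mul hh.le, ← Real.rpow_add hh]
    ring_nf
  have hlow : h ^ (-δ) / (1 + h ^ (-δ)) = 1 / (1 + h ^ δ) := by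
    rw [hε]
    field_simp
    ring
  have hup : (1 + h ^ (-δ)) / h ^ (-δ) = 1 + h ^ δ := by
    rw [hε]
    field_simp
    ring
  obtain ⟨hL, hU⟩ := hB _ (Real.rpow_pos_of_pos hh _) hadmissible
  rw [hlow, mul_assoc, herr] at hL
  rw [hup, mul_assoc, herr] at hU
  constructor <;> [linarith [one_div_mul_eq_div (1 + h ^ δ) a]; exact hU]

theorem stmt_11_general (c d ρ C γ : ℝ) (hρ : 0 < ρ)
    (hγ : γ ∈ Ioo (0 : ℝ) (1 / 2)) (Λ g : ℝ → ℝ) (hg : ContinuousOn g (Icc c d))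
    (H : ∀ s t : ℝ, c ≤ s → s < t → t ≤ d → ∀ ε : ℝ, 0 < ε → ε < ρ / (t - s) →
      (ε / (1 + ε)) * g s ^ 2 - C * ε ^ (1 + γ) * (t - s) ^ γ ≤ (Λ t - Λ s) / (t - s) ∧
      (Λ t - Λ s) / (t - s) ≤ ((1 + ε) / ε) * g t ^ 2 + C * ε ^ (1 + γ) * (t - s) ^ γ) :
    ∀ t ∈ Ioo c d, HasDerivWithinAt Λ (g t ^ 2) (Icc c d) t := by
  intro t ht
  have ht' : t ∈ Icc c d := Ioo_subset_Icc_self ht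
  have hγ0 : 0 < γ := hγ.1
  set δ := γ / (2 * (1 + γ)) with hδ_def
  have hδ : δ * (1 + γ) = γ / 2 := by rw [hδ_def]; field_simp
  have hδ0 : 0 < δ := by positivity
  have hδ1 : 0 < 1 - δ := by nlinarith
  have hκ : 0 < γ - δ * (1 + γ) := by linarith
  set F := 𝓝[Icc c d] t ×ˢ 𝓝[Icc c d] t
  have hF : F ≤ 𝓝 (t, t) :=
    (Filter.prod_mono nhdsWithin_le_nhds nhdsWithin_le_nhds).trans_eq nhds_prod_eq.symm
  have hpow {a : ℝ} (ha : 0 < a) : Tendsto (fun p : ℝ × ℝ => (p.2 - p.1) ^ a) F (𝓝 0) :=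
    (tendsto_sub_rpow_nhds_diagonal ha t).mono_left hF
  have hg₁ : Tendsto (fun p : ℝ × ℝ => g p.1) F (𝓝 (g t)) := (hg t ht').tendsto.comp tendsto_fst
  have hg₂ : Tendsto (fun p : ℝ × ℝ => g p.2) F (𝓝 (g t)) := (hg t ht').tendsto.comp tendsto_snd
  have hden : Tendsto (fun p : ℝ × ℝ => 1 + (p.2 - p.1) ^ δ) F (𝓝 1) := by
    simpa using (hpow hδ0).const_add 1
  have herr : Tendsto (fun p : ℝ × ℝ => C * (p.2 - p.1) ^ (γ - δ * (1 + γ))) F (𝓝 0) := by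
    simpa using (hpow hκ).const_mul C
  refine hasDerivWithinAt_of_slope_squeeze ht'
    (L := fun p => g p.1 ^ 2 / (1 + (p.2 - p.1) ^ δ) - C * (p.2 - p.1) ^ (γ - δ * (1 + γ)))
    (U := fun p => (1 + (p.2 - p.1) ^ δ) * g p.2 ^ 2 + C * (p.2 - p.1) ^ (γ - δ * (1 + γ)))
    ?_ ?_ ?_
  · simpa using ((hg₁.pow 2).div hden one_ne_zero).sub herr
  · simpa using (hden.mul (hg₂.pow 2)).add herr
  · filter_upwards [(hpow hδ1).eventually (gt_mem_nhds hρ),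
      prod_mem_prod self_mem_nhdsWithin self_mem_nhdsWithin] with ⟨s, u⟩ hsmall ⟨hs, hu⟩ hsu
    rw [slope_def_field]
    exact bounds_at_rpow_neg (sub_pos.2 hsu) hsmall (H s u hs.1 hsu hu.2)

/-- If the two-sided finite-difference bound
`(ε/(1+ε)) g(s)² − C ε^(1+γ)(t−s)^γ ≤ (Λ(t) − Λ(s))/(t−s) ≤ ((1+ε)/ε) g(t)² + C ε^(1+γ)(t−s)^γ`
holds for all `s < t` in `[c, d]` and all `0 < ε < ρ/(t−s)`, with `g` continuous, then `Λ` is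
differentiable on `(c, d)` with derivative `g(t)²`. -/
theorem stmt_11 (c d ρ C γ : ℝ) (hcd : c < d) (hρ : 0 < ρ) (hC : 0 < C)
    (hγ : γ ∈ Ioo (0 : ℝ) (1 / 2)) (Λ g : ℝ → ℝ) (hg : ContinuousOn g (Icc c d))
    (H : ∀ s t : ℝ, c ≤ s → s < t → t ≤ d → ∀ ε : ℝ, 0 < ε → ε < ρ / (t - s) →
      (ε / (1 + ε)) * g s ^ 2 - C * ε ^ (1 + γ) * (t - s) ^ γ ≤ (Λ t - Λ s) / (t - s) ∧
      (Λ t - Λ s) / (t - s) ≤ ((1 + ε) / ε) * g t ^ 2 + C * ε ^ (1 + γ) * (t - s) ^ γ) :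
    ∀ t ∈ Ioo c d, HasDerivWithinAt Λ (g t ^ 2) (Icc c d) t :=
  stmt_11_general c d ρ C γ hρ hγ Λ g hg H
end

section
/- Let f_t : [t, ∞) → ℝ be a family of functions indexed by t near t_0, each with f_t(t) = 0, satisfying the uniform near-linearity bound |f_t(x) − (x − t) f_t'(t)| ≤ K (η + |f_t'(t)|)(x − t)^{2+γ} on a fixed neighborhood of t_0, with |f_t'(t)| uniformly bounded. If f_t(x) → f_{t_0}(x) pointwise (for each fixed x near t_0, x > t_0) as t → t_0, then f_t'(t) → f_{t_0}'(t_0). -/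
open Set Filter

/-- Convergence of boundary derivatives from near-linearity at the moving left endpoint:
if each `f t` vanishes at `t`, is uniformly approximately linear near `t` with slope
`d t := deriv (f t) t`, the slopes are uniformly bounded, and `f t x → f t₀ x` pointwise
as `t → t₀` (for each fixed `x > t₀` near `t₀`), then `deriv (f t) t → deriv (f t₀) t₀`. -/
theorem stmt_13 (t₀ δ K η γ M : ℝ) (hδ : 0 < δ) (hK : 0 ≤ K) (hη : 0 ≤ η)
    (hγ : γ ∈ Ioo (0 : ℝ) (1 / 2)) (f : ℝ → ℝ → ℝ)
    (h0 : ∀ t ∈ Icc (t₀ - δ) (t₀ + δ), f t t = 0)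
    (hlin : ∀ t ∈ Icc (t₀ - δ) (t₀ + δ), ∀ x ∈ Icc t (t₀ + δ),
      |f t x - (x - t) * deriv (f t) t| ≤ K * (η + |deriv (f t) t|) * (x - t) ^ (2 + γ))
    (hbdd : ∀ t ∈ Icc (t₀ - δ) (t₀ + δ), |deriv (f t) t| ≤ M)
    (hconv : ∀ x ∈ Ioc t₀ (t₀ + δ),
      Tendsto (fun t => f t x) (nhds t₀) (nhds (f t₀ x))) :
    Tendsto (fun t => deriv (f t) t) (nhds t₀) (nhds (deriv (f t₀) t₀)) := by
  obtain ⟨hγ0, hγ2⟩ := hγ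
  set d : ℝ → ℝ := fun t => deriv (f t) t with hd
  have hM : 0 ≤ M := le_trans (abs_nonneg _) (hbdd t₀ ⟨by linarith, by linarith⟩)
  set C : ℝ := K * (η + M) with hC
  have hC0 : 0 ≤ C := mul_nonneg hK (by linarith)
  have key : ∀ t ∈ Icc (t₀ - δ) (t₀ + δ), ∀ x ∈ Icc t (t₀ + δ),
      t < x → x - t ≤ 1 → |f t x / (x - t) - d t| ≤ C * (x - t) := by
    intro t ht x hx htx hle
    have ha : 0 < x - t := by linarith
    have h1 := hlin t ht x hx
    have hb : |d t| ≤ M := hbdd t ht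
    have hp : (x - t) ^ (2 + γ) ≤ (x - t) ^ (2 : ℝ) :=
      Real.rpow_le_rpow_of_exponent_ge ha hle (by linarith)
    have hp2 : (x - t) ^ (2 : ℝ) = (x - t) * (x - t) := by
      rw [show (2 : ℝ) = ((2 : ℕ) : ℝ) by norm_num, Real.rpow_natCast]; ring
    have h2 : K * (η + |d t|) * (x - t) ^ (2 + γ) ≤ C * (x - t) * (x - t) := by
      have e1 : K * (η + |d t|) ≤ C := by
        rw [hC]; exact mul_le_mul_of_nonneg_left (by linarith) hK
      have e2 : (x - t) ^ (2 + γ) ≤ (x - t) * (x - t) := hp2 ▸ hp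
      calc K * (η + |d t|) * (x - t) ^ (2 + γ)
          ≤ C * ((x - t) * (x - t)) := by
            apply mul_le_mul e1 e2 (by positivity) hC0
        _ = C * (x - t) * (x - t) := by ring
    have heq : f t x / (x - t) - d t = (f t x - (x - t) * d t) / (x - t) := by
      field_simp
    rw [heq, abs_div, abs_of_pos ha, div_le_iff₀ ha]
    calc |f t x - (x - t) * d t| ≤ K * (η + |d t|) * (x - t) ^ (2 + γ) := h1
      _ ≤ C * (x - t) * (x - t) := h2
  rw [Metric.tendsto_nhds]
  intro ε hε
  have hCp : (0 : ℝ) < C + 1 := by linarith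
  set h : ℝ := min δ (min (1 / 2) (ε / (8 * (C + 1)))) with hhdef
  have hh0 : 0 < h := by
    apply lt_min hδ (lt_min (by norm_num) (by positivity))
  have hhδ : h ≤ δ := min_le_left _ _
  have hh2 : h ≤ 1 / 2 := le_trans (min_le_right _ _) (min_le_left _ _)
  have hhε : h ≤ ε / (8 * (C + 1)) := le_trans (min_le_right _ _) (min_le_right _ _)
  have hhε' : (C + 1) * h ≤ ε / 8 := by
    rw [le_div_iff₀ (by positivity : (0:ℝ) < 8 * (C + 1))] at hhε
    nlinarith
  set x : ℝ := t₀ + h with hxdef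
  have hxI : x ∈ Ioc t₀ (t₀ + δ) := ⟨by simp [hxdef]; linarith, by simp [hxdef]; linarith⟩
  have hxt₀ : x - t₀ = h := by simp [hxdef]
  have hthird : |f t₀ x / (x - t₀) - d t₀| ≤ C * h := by
    have := key t₀ ⟨by linarith, by linarith⟩ x ⟨by linarith [hxI.1.le], hxI.2⟩
      hxI.1 (by rw [hxt₀]; linarith)
    rw [hxt₀] at this ⊢; exact this
  have hmid : Tendsto (fun t => f t x / (x - t)) (nhds t₀) (nhds (f t₀ x / (x - t₀))) := by
    apply Tendsto.div (hconv x hxI) (tendsto_const_nhds.sub tendsto_id)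
    rw [hxt₀]; exact ne_of_gt hh0
  have hmid' : ∀ᶠ t in nhds t₀, |f t x / (x - t) - f t₀ x / (x - t₀)| < ε / 4 := by
    have := Metric.tendsto_nhds.mp hmid (ε / 4) (by linarith)
    simpa [Real.dist_eq] using this
  have hnear : ∀ᶠ t in nhds t₀, t ∈ Ioo (t₀ - h / 2) (t₀ + h / 2) :=
    Ioo_mem_nhds (by linarith) (by linarith)
  filter_upwards [hmid', hnear] with t hmt hnt
  obtain ⟨hn1, hn2⟩ := hnt
  have htI : t ∈ Icc (t₀ - δ) (t₀ + δ) := ⟨by linarith, by linarith⟩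
  have htx : t < x := by rw [hxdef]; linarith
  have hxub : x - t ≤ 3 * h / 2 := by rw [hxdef]; linarith
  have hfirst : |f t x / (x - t) - d t| ≤ C * (x - t) :=
    key t htI x ⟨htx.le, hxI.2⟩ htx (by linarith)
  have hfirst' : C * (x - t) ≤ ε / 4 := by nlinarith [mul_le_mul_of_nonneg_left hxub hC0]
  have hthird' : C * h ≤ ε / 4 := by nlinarith
  rw [Real.dist_eq]
  have tri : |d t - d t₀| ≤ |d t - f t x / (x - t)| + |f t x / (x - t) - f t₀ x / (x - t₀)|
      + |f t₀ x / (x - t₀) - d t₀| := by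
    calc |d t - d t₀| = |(d t - f t x / (x - t)) + ((f t x / (x - t) - f t₀ x / (x - t₀))
        + (f t₀ x / (x - t₀) - d t₀))| := by ring_nf
      _ ≤ _ := by
        refine le_trans (abs_add_le _ _) ?_
        have := abs_add_le (f t x / (x - t) - f t₀ x / (x - t₀)) (f t₀ x / (x - t₀) - d t₀)
        linarith
    -- end
  have h1' : |d t - f t x / (x - t)| ≤ ε / 4 := by
    rw [abs_sub_comm]; linarith
  have h3' : |f t₀ x / (x - t₀) - d t₀| ≤ ε / 4 := by linarith
  linarith
end
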